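/- The map f_ν is monotone: ⟨f_ν(x) − f_ν(y), x − y⟩ ≥ 0 for all x, y ∈ Ω. -/

import Mathlib

open MeasureTheory Set

noncomputable section

/-- Euclidean space `ℝⁿ`. -/
abbrev Euc (n : ℕ) := EuclideanSpace ℝ (Fin n)

/-- The space of affine hyperplanes in `ℝⁿ`, encoded as pairs `(v, c)` with `‖v‖ = 1`,
representing the hyperplane `{x : ⟪x, v⟫ = c}`. -/
abbrev Hyp (n : ℕ) := {p : Euc n × ℝ // ‖p.1‖ = 1}

/-- The hyperplane determined by `H`, as a subset of `ℝⁿ`. -/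
def hset {n : ℕ} (H : Hyp n) : Set (Euc n) := {x | (inner ℝ x H.1.1 : ℝ) = H.1.2}

/-- `meets A = π A`: the set of hyperplanes intersecting `A`. -/
def meets {n : ℕ} (A : Set (Euc n)) : Set (Hyp n) := {H | (hset H ∩ A).Nonempty}

/-- The unit normal of `H` pointing out of the halfspace containing the basepoint `o`. -/
def nrm {n : ℕ} (o : Euc n) (H : Hyp n) : Euc n :=
  if (inner ℝ o H.1.1 : ℝ) < H.1.2 then H.1.1 else -H.1.1

/-- `fnu ν o x = ∫_{π[o,x]} n(H) dν(H)`. -/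
def fnu {n : ℕ} (ν : Measure (Hyp n)) (o : Euc n) (x : Euc n) : Euc n :=
  ∫ H in meets (segment ℝ o x), nrm o H ∂ν

/-- `sin α(v, H) = |⟪v, n(H)⟫| / |v|`, the sine of the angle between the line of `v`
and the hyperplane `H`. -/
def sinA {n : ℕ} (v : Euc n) (H : Hyp n) : ℝ := |(inner ℝ v H.1.1 : ℝ)| / ‖v‖

/-!
Write `A = π[o,x]` and `B = π[o,y]`. The hyperplanes of `A ∩ B` contribute to `f_ν(x)` and
`f_ν(y)` alike, so `⟪f_ν(x) - f_ν(y), x - y⟫` is the integral of `⟪n(H), x - y⟫` over `A \ B`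
minus its integral over `B \ A`. A hyperplane separating `x` from `o` but not `y` from `o` has
`o` and `y` strictly on one side and `x` weakly on the other, so `⟪n(H), x - y⟫ ≥ 0` on `A \ B`;
symmetrically it is `≤ 0` on `B \ A`.
-/

theorem setIntegral_le_setIntegral_of_sdiff {X : Type*} [MeasurableSpace X] {μ : Measure X}
    {f : X → ℝ} {s t : Set X} (hs : MeasurableSet s) (ht : MeasurableSet t)
    (hfs : IntegrableOn f s μ) (hft : IntegrableOn f t μ)
    (hst : ∀ x ∈ s \ t, f x ≤ 0) (hts : ∀ x ∈ t \ s, 0 ≤ f x) :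
    ∫ x in s, f x ∂μ ≤ ∫ x in t, f x ∂μ := by
  rw [← integral_inter_add_sdiff ht hfs, ← integral_inter_add_sdiff hs hft, inter_comm t s]
  exact add_le_add le_rfl
    ((setIntegral_nonpos (hs.diff ht) hst).trans (setIntegral_nonneg (ht.diff hs) hts))

theorem isCompact_segment {E : Type*} [AddCommGroup E] [Module ℝ E] [TopologicalSpace E]
    [IsTopologicalAddGroup E] [ContinuousSMul ℝ E] (a b : E) : IsCompact (segment ℝ a b) :=
  convexHull_pair (𝕜 := ℝ) a b ▸ (toFinite {a, b}).isCompact_convexHull ℝ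

theorem lt_and_lt_of_mem_uIcc_of_notMem_uIcc {α : Type*} [LinearOrder α] {p q r c : α} (hq : c ∈ uIcc p q)
    (hr : c ∉ uIcc p r) : (p < c → r < q) ∧ (c ≤ p → q < r) := by
  rw [mem_uIcc] at hq hr
  grind

variable {n : ℕ}

instance : OpensMeasurableSpace (Hyp n) := Subtype.opensMeasurableSpace _

theorem mem_meets_segment_iff (H : Hyp n) (a b : Euc n) :
    H ∈ meets (segment ℝ a b) ↔
      H.1.2 ∈ uIcc (inner ℝ a H.1.1 : ℝ) (inner ℝ b H.1.1 : ℝ) := by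
  have himage : (fun z : Euc n => (inner ℝ z H.1.1 : ℝ)) '' segment ℝ a b =
      uIcc (inner ℝ a H.1.1 : ℝ) (inner ℝ b H.1.1 : ℝ) := by
    have hφ : (fun z : Euc n => (inner ℝ z H.1.1 : ℝ)) =
        (innerSL ℝ H.1.1).toLinearMap.toAffineMap :=
      funext fun z => real_inner_comm _ _
    rw [hφ, image_segment, segment_eq_uIcc]
    exact congrArg₂ uIcc (real_inner_comm a H.1.1) (real_inner_comm b H.1.1)
  rw [← himage]
  exact ⟨fun ⟨z, hz, hzs⟩ => ⟨z, hzs, hz⟩, fun ⟨z, hzs, hz⟩ => ⟨z, hz, hzs⟩⟩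

theorem isClosed_meets_segment (a b : Euc n) : IsClosed (meets (segment ℝ a b)) := by
  have hv : Continuous fun H : Hyp n => H.1.1 := continuous_subtype_val.fst
  have hc : Continuous fun H : Hyp n => H.1.2 := continuous_subtype_val.snd
  have ha : Continuous fun H : Hyp n => (inner ℝ a H.1.1 : ℝ) := continuous_const.inner hv
  have hb : Continuous fun H : Hyp n => (inner ℝ b H.1.1 : ℝ) := continuous_const.inner hv
  have hmeets : meets (segment ℝ a b) =
      {H : Hyp n | min (inner ℝ a H.1.1 : ℝ) (inner ℝ b H.1.1) ≤ H.1.2} ∩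
        {H | H.1.2 ≤ max (inner ℝ a H.1.1 : ℝ) (inner ℝ b H.1.1)} := by
    ext H
    exact mem_meets_segment_iff H a b
  rw [hmeets]
  exact (isClosed_le (ha.min hb) hc).inter (isClosed_le hc (ha.max hb))

theorem measurable_nrm (o : Euc n) : Measurable (nrm o) := by
  have hv : Continuous fun H : Hyp n => H.1.1 := continuous_subtype_val.fst
  have hc : Continuous fun H : Hyp n => H.1.2 := continuous_subtype_val.snd
  exact Measurable.ite (isOpen_lt (continuous_const.inner hv) hc).measurableSet
    hv.measurable hv.neg.measurable

theorem norm_nrm (o : Euc n) (H : Hyp n) : ‖nrm o H‖ = 1 := by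
  unfold nrm
  split_ifs <;> simp [H.2]

theorem integrableOn_nrm {ν : Measure (Hyp n)} (o : Euc n) {A : Set (Hyp n)} (hA : ν A ≠ ⊤) :
    IntegrableOn (nrm o) A ν :=
  Measure.integrableOn_of_bounded hA (measurable_nrm o).aestronglyMeasurable
    (.of_forall fun H => (norm_nrm o H).le)

theorem inner_sub_nrm_nonneg {o a b : Euc n} {H : Hyp n} (ha : H ∈ meets (segment ℝ o a))
    (hb : H ∉ meets (segment ℝ o b)) : 0 ≤ (inner ℝ (a - b) (nrm o H) : ℝ) := by
  rw [mem_meets_segment_iff] at ha hb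
  obtain ⟨hlt, hle⟩ := lt_and_lt_of_mem_uIcc_of_notMem_uIcc ha hb
  unfold nrm
  split_ifs with hoc
  · rw [inner_sub_left]
    linarith [hlt hoc]
  · rw [inner_neg_right, inner_sub_left]
    linarith [hle (not_lt.1 hoc)]

theorem inner_sub_fnu_sub_fnu (ν : Measure (Hyp n)) (o x y : Euc n)
    (hx : ν (meets (segment ℝ o x)) ≠ ⊤) (hy : ν (meets (segment ℝ o y)) ≠ ⊤) :
    (inner ℝ (x - y) (fnu ν o x - fnu ν o y) : ℝ) =
      (∫ H in meets (segment ℝ o x), (inner ℝ (x - y) (nrm o H) : ℝ) ∂ν) -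
        ∫ H in meets (segment ℝ o y), (inner ℝ (x - y) (nrm o H) : ℝ) ∂ν := by
  rw [inner_sub_right, fnu, fnu, integral_inner (integrableOn_nrm o hx),
    integral_inner (integrableOn_nrm o hy)]

theorem stmt6_general (n : ℕ) (Ω : Set (Euc n))
    (hΩc : Convex ℝ Ω) (ν : Measure (Hyp n))
    (hcpt : ∀ K ⊆ Ω, IsCompact K → ν (meets K) < ⊤)
    (o : Euc n) (ho : o ∈ Ω) :
    ∀ x ∈ Ω, ∀ y ∈ Ω, 0 ≤ (inner ℝ (fnu ν o x - fnu ν o y) (x - y) : ℝ) := by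
  intro x hx y hy
  have hfin : ∀ z ∈ Ω, ν (meets (segment ℝ o z)) ≠ ⊤ := fun z hz =>
    (hcpt _ (hΩc.segment_subset ho hz) (isCompact_segment o z)).ne
  have hint : ∀ z ∈ Ω, IntegrableOn (fun H => (inner ℝ (x - y) (nrm o H) : ℝ))
      (meets (segment ℝ o z)) ν := fun z hz =>
    (integrableOn_nrm o (hfin z hz)).const_inner (x - y)
  rw [real_inner_comm, inner_sub_fnu_sub_fnu ν o x y (hfin x hx) (hfin y hy), sub_nonneg]
  refine setIntegral_le_setIntegral_of_sdiff (isClosed_meets_segment o y).measurableSet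
    (isClosed_meets_segment o x).measurableSet (hint y hy) (hint x hx) ?_ ?_
  · rintro H ⟨hHy, hHx⟩
    have hyx := inner_sub_nrm_nonneg hHy hHx
    rw [← neg_sub, inner_neg_left] at hyx
    linarith
  · rintro H ⟨hHx, hHy⟩
    exact inner_sub_nrm_nonneg hHx hHy

/-- `f_ν` is monotone: `⟨f_ν(x) − f_ν(y), x − y⟩ ≥ 0`. -/
theorem stmt6 (n : ℕ) (hn : 2 ≤ n) (Ω : Set (Euc n)) (hΩo : IsOpen Ω) (hΩne : Ω.Nonempty)
    (hΩc : Convex ℝ Ω) (ν : Measure (Hyp n))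
    (hpt : ∀ p ∈ Ω, ν (meets {p}) = 0)
    (hseg : ∀ x ∈ Ω, ∀ y ∈ Ω, x ≠ y → 0 < ν (meets (segment ℝ x y)))
    (hcpt : ∀ K ⊆ Ω, IsCompact K → ν (meets K) < ⊤)
    (o : Euc n) (ho : o ∈ Ω) :
    ∀ x ∈ Ω, ∀ y ∈ Ω, 0 ≤ (inner ℝ (fnu ν o x - fnu ν o y) (x - y) : ℝ) :=
  stmt6_general n Ω hΩc ν hcpt o ho
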